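/- Let M be a prime and χ a nontrivial Dirichlet character modulo M with complex values (χ(0) = 0), and write χ̄ for the complex-conjugate character. For x ∈ ℤ/Mℤ write e_M(x) = exp(2πi·x̃/M) for any lift x̃ of x. Let ℓ1, ℓ2, c1, c2, r1, r2 ∈ (ℤ/Mℤ)ˣ and n ∈ ℤ/Mℤ, and set F = ℓ1·c2·r2 − ℓ2·c1·r1 + c1·c2·n and K = (r1·r2·c1·c2)^{-1}·F in ℤ/Mℤ. Then ∑_{b ∈ ℤ/Mℤ} ∑_{a1 ∈ (ℤ/Mℤ)ˣ} ∑_{a2 ∈ (ℤ/Mℤ)ˣ} χ(a1^{-1} + r1) · χ̄(a2^{-1} + r2) · e_M( b·( c1^{-1}·ℓ1·a1 − c2^{-1}·ℓ2·a2 + c1^{-1}·ℓ1·r1^{-1} − c2^{-1}·ℓ2·r2^{-1} + r1^{-1}·r2^{-1}·n ) ) = M · ∑_{x ∈ (ℤ/Mℤ)ˣ, c2^{-1}·ℓ2·x ≠ K} χ( c1^{-1}·ℓ1·( c2^{-1}·ℓ2·x − K )^{-1} + r1 ) · χ̄( x^{-1} + r2 ). -/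

import Mathlib

/-!
By orthogonality of additive characters, the sum over `b` equals `M`
exactly when `c1⁻¹ℓ1·a1 - c2⁻¹ℓ2·a2 + K = 0` (the constant part of the phase is `K`) and `0`
otherwise. As `ℤ/Mℤ` is a field, for each unit `a2 = x` this linear relation has the unique solution
`a1 = (c1⁻¹ℓ1)⁻¹(c2⁻¹ℓ2·x - K)`, which is a unit precisely when `c2⁻¹ℓ2·x ≠ K`.
-/

open Complex

/-- The standard additive character `e_M(x) = exp(2πi·x̃/M)` on `ℤ/Mℤ`,
evaluated at the canonical lift `x̃ = x.val`. -/
noncomputable def eZMod (q : ℕ) (x : ZMod q) : ℂ :=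
  Complex.exp (2 * Real.pi * Complex.I * (x.val : ℂ) / q)

lemma eZMod_eq_stdAddChar (q : ℕ) [NeZero q] (x : ZMod q) : eZMod q x = ZMod.stdAddChar x := by
  rw [ZMod.stdAddChar_apply, ZMod.toCircle_apply, eZMod]

lemma sum_eZMod_mul (q : ℕ) [NeZero q] (t : ZMod q) :
    ∑ b : ZMod q, eZMod q (b * t) = if t = 0 then (q : ℂ) else 0 := by
  simp only [eZMod_eq_stdAddChar, AddChar.sum_mulShift t (ZMod.isPrimitive_stdAddChar q),
    ZMod.card, Nat.cast_ite, Nat.cast_zero]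

lemma sum_units_ite_val_eq {G₀ R : Type*} [GroupWithZero G₀] [Fintype G₀ˣ] [DecidableEq G₀]
    [AddCommMonoid R] (w : G₀) (f : G₀ → R) :
    ∑ a : G₀ˣ, (if (a : G₀) = w then f a else 0) = if w ≠ 0 then f w else 0 := by
  by_cases hw : w = 0
  · simp [hw]
  · have hval : ∀ a : G₀ˣ, (a : G₀) = w ↔ a = Units.mk0 w hw := fun a => by
      rw [Units.ext_iff, Units.val_mk0]
    simp only [hval, Fintype.sum_ite_eq', Units.val_mk0, ne_eq, hw, not_false_eq_true, if_true]

lemma sum_units_mul_ite_linear_eq_zero {F R : Type*} [Field F] [Fintype F] [DecidableEq F]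
    [CommSemiring R] (f g : F → R) (c : R) {u : F} (hu : u ≠ 0) (v K : F) :
    ∑ a2 : Fˣ, ∑ a1 : Fˣ, f a1 * g a2 * (if u * a1 - v * a2 + K = 0 then c else 0)
      = c * ∑ x ∈ Finset.univ.filter (fun x : Fˣ => v * x ≠ K), f (u⁻¹ * (v * x - K)) * g x := by
  rw [Finset.mul_sum, Finset.sum_filter]
  refine Finset.sum_congr rfl fun a2 _ => ?_
  have hsolve : ∀ a1 : F, u * a1 - v * a2 + K = 0 ↔ a1 = u⁻¹ * (v * a2 - K) := fun a1 => by
    rw [eq_inv_mul_iff_mul_eq₀ hu]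
    constructor <;> intro h <;> linear_combination h
  simp only [hsolve, mul_ite, mul_zero]
  rw [sum_units_ite_val_eq (u⁻¹ * (v * a2 - K)) (fun a1 => f a1 * g a2 * c)]
  simp only [ne_eq, mul_eq_zero, inv_eq_zero, hu, sub_eq_zero, false_or]
  split_ifs <;> ring

lemma sum_eZMod_mul_linear_units (M : ℕ) [Fact M.Prime] (f g : ZMod M → ℂ) {u : ZMod M}
    (hu : u ≠ 0) (v K : ZMod M) :
    ∑ b : ZMod M, ∑ a1 : (ZMod M)ˣ, ∑ a2 : (ZMod M)ˣ,
      f a1 * g a2 * eZMod M (b * (u * a1 - v * a2 + K))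
    = (M : ℂ) * ∑ x ∈ Finset.univ.filter (fun x : (ZMod M)ˣ => v * x ≠ K),
        f (u⁻¹ * (v * x - K)) * g x := by
  rw [← sum_units_mul_ite_linear_eq_zero f g _ hu, Finset.sum_comm_cycle]
  refine Finset.sum_congr rfl fun a2 _ => ?_
  rw [Finset.sum_comm]
  refine Finset.sum_congr rfl fun a1 _ => ?_
  rw [← Finset.mul_sum, sum_eZMod_mul]

lemma constant_phase_eq {F : Type*} [Field F] (ℓ1 ℓ2 c1 c2 r1 r2 : Fˣ) (n : F) :
    ((c1⁻¹ : Fˣ) : F) * ℓ1 * ((r1⁻¹ : Fˣ) : F) - ((c2⁻¹ : Fˣ) : F) * ℓ2 * ((r2⁻¹ : Fˣ) : F)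
        + ((r1⁻¹ : Fˣ) : F) * ((r2⁻¹ : Fˣ) : F) * n
      = (((r1 * r2 * c1 * c2)⁻¹ : Fˣ) : F)
          * (ℓ1 * c2 * r2 - ℓ2 * c1 * r1 + c1 * c2 * n) := by
  simp only [Units.val_inv_eq_inv_val, Units.val_mul]
  field_simp

theorem complete_char_sum_reduction_general
    (M : ℕ) (hM : M.Prime) (χ : DirichletCharacter ℂ M)
    (ℓ1 ℓ2 c1 c2 r1 r2 : (ZMod M)ˣ) (n : ZMod M) :
    haveI : NeZero M := ⟨hM.ne_zero⟩
    let F : ZMod M := (ℓ1 : ZMod M) * (c2 : ZMod M) * (r2 : ZMod M)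
      - (ℓ2 : ZMod M) * (c1 : ZMod M) * (r1 : ZMod M)
      + (c1 : ZMod M) * (c2 : ZMod M) * n
    let K : ZMod M := (((r1 * r2 * c1 * c2)⁻¹ : (ZMod M)ˣ) : ZMod M) * F
    ∑ b : ZMod M, ∑ a1 : (ZMod M)ˣ, ∑ a2 : (ZMod M)ˣ,
        χ (((a1⁻¹ : (ZMod M)ˣ) : ZMod M) + (r1 : ZMod M)) *
        (starRingEnd ℂ) (χ (((a2⁻¹ : (ZMod M)ˣ) : ZMod M) + (r2 : ZMod M))) *
        eZMod M (b * (((c1⁻¹ : (ZMod M)ˣ) : ZMod M) * (ℓ1 : ZMod M) * (a1 : ZMod M)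
          - ((c2⁻¹ : (ZMod M)ˣ) : ZMod M) * (ℓ2 : ZMod M) * (a2 : ZMod M)
          + ((c1⁻¹ : (ZMod M)ˣ) : ZMod M) * (ℓ1 : ZMod M) * ((r1⁻¹ : (ZMod M)ˣ) : ZMod M)
          - ((c2⁻¹ : (ZMod M)ˣ) : ZMod M) * (ℓ2 : ZMod M) * ((r2⁻¹ : (ZMod M)ˣ) : ZMod M)
          + ((r1⁻¹ : (ZMod M)ˣ) : ZMod M) * ((r2⁻¹ : (ZMod M)ˣ) : ZMod M) * n))
      = (M : ℂ) *
        ∑ x ∈ Finset.univ.filter (fun x : (ZMod M)ˣ =>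
            ((c2⁻¹ : (ZMod M)ˣ) : ZMod M) * (ℓ2 : ZMod M) * (x : ZMod M) ≠ K),
          χ (((c1⁻¹ : (ZMod M)ˣ) : ZMod M) * (ℓ1 : ZMod M) *
              (((c2⁻¹ : (ZMod M)ˣ) : ZMod M) * (ℓ2 : ZMod M) * (x : ZMod M) - K)⁻¹
            + (r1 : ZMod M)) *
          (starRingEnd ℂ) (χ (((x⁻¹ : (ZMod M)ˣ) : ZMod M) + (r2 : ZMod M))) := by
  have : Fact M.Prime := ⟨hM⟩
  intro F K
  have hK : _ = K := constant_phase_eq ℓ1 ℓ2 c1 c2 r1 r2 n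
  simp only [add_sub_assoc, add_assoc, hK]
  simp only [Units.val_inv_eq_inv_val]
  rw [sum_eZMod_mul_linear_units M (fun z => χ (z⁻¹ + r1))
    (fun z => (starRingEnd ℂ) (χ (z⁻¹ + r2))) (mul_ne_zero (inv_ne_zero c1.ne_zero) ℓ1.ne_zero)]
  simp only [mul_inv, inv_inv]

/-- Evaluation of the complete character sum arising after Cauchy–Schwarz and Poisson:
summing the additive character over `b` picks out the relation
`c1⁻¹ℓ1·a1 - c2⁻¹ℓ2·a2 + K = 0` (where `K = (r1r2c1c2)⁻¹·F` and
`F = ℓ1c2r2 - ℓ2c1r1 + c1c2n`), reducing the triple sum to `M` times a one-variable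
complete character sum of Möbius type. -/
theorem complete_char_sum_reduction
    (M : ℕ) (hM : M.Prime) (χ : DirichletCharacter ℂ M) (hχ : χ ≠ 1)
    (ℓ1 ℓ2 c1 c2 r1 r2 : (ZMod M)ˣ) (n : ZMod M) :
    haveI : NeZero M := ⟨hM.ne_zero⟩
    let F : ZMod M := (ℓ1 : ZMod M) * (c2 : ZMod M) * (r2 : ZMod M)
      - (ℓ2 : ZMod M) * (c1 : ZMod M) * (r1 : ZMod M)
      + (c1 : ZMod M) * (c2 : ZMod M) * n
    let K : ZMod M := (((r1 * r2 * c1 * c2)⁻¹ : (ZMod M)ˣ) : ZMod M) * F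
    ∑ b : ZMod M, ∑ a1 : (ZMod M)ˣ, ∑ a2 : (ZMod M)ˣ,
        χ (((a1⁻¹ : (ZMod M)ˣ) : ZMod M) + (r1 : ZMod M)) *
        (starRingEnd ℂ) (χ (((a2⁻¹ : (ZMod M)ˣ) : ZMod M) + (r2 : ZMod M))) *
        eZMod M (b * (((c1⁻¹ : (ZMod M)ˣ) : ZMod M) * (ℓ1 : ZMod M) * (a1 : ZMod M)
          - ((c2⁻¹ : (ZMod M)ˣ) : ZMod M) * (ℓ2 : ZMod M) * (a2 : ZMod M)
          + ((c1⁻¹ : (ZMod M)ˣ) : ZMod M) * (ℓ1 : ZMod M) * ((r1⁻¹ : (ZMod M)ˣ) : ZMod M)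
          - ((c2⁻¹ : (ZMod M)ˣ) : ZMod M) * (ℓ2 : ZMod M) * ((r2⁻¹ : (ZMod M)ˣ) : ZMod M)
          + ((r1⁻¹ : (ZMod M)ˣ) : ZMod M) * ((r2⁻¹ : (ZMod M)ˣ) : ZMod M) * n))
      = (M : ℂ) *
        ∑ x ∈ Finset.univ.filter (fun x : (ZMod M)ˣ =>
            ((c2⁻¹ : (ZMod M)ˣ) : ZMod M) * (ℓ2 : ZMod M) * (x : ZMod M) ≠ K),
          χ (((c1⁻¹ : (ZMod M)ˣ) : ZMod M) * (ℓ1 : ZMod M) *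
              (((c2⁻¹ : (ZMod M)ˣ) : ZMod M) * (ℓ2 : ZMod M) * (x : ZMod M) - K)⁻¹
            + (r1 : ZMod M)) *
          (starRingEnd ℂ) (χ (((x⁻¹ : (ZMod M)ˣ) : ZMod M) + (r2 : ZMod M))) :=
  complete_char_sum_reduction_general M hM χ ℓ1 ℓ2 c1 c2 r1 r2 n
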